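/- arXiv:1310.8371 — 4 statements merged into one kernel-verified Lean document; each statement's English description precedes it below -/
import Mathlib

section
/- For a, b, c, d ∈ ℂ, the Neveu–Schwarz modules SA_{a,b} and SA_{c,d} are isomorphic if and only if one of the following holds: (i) a − c ∈ ℤ and b = d; (ii) a ∉ ℤ, a − c ∈ Z, b = 1 and d = 1/2; (iii) a ∉ Z, a − c ∈ Z, b = 1/2 and d = 1. -/
/-!
`L 0` acts diagonally on `SA_{a,b}` with pairwise distinct eigenvalues, `a + j` on `x j` and
`a + 1/2 + j` on `y j`, so an isomorphism `SA_{a,b} ≅ SA_{c,d}` sends each basis vector to a nonzero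
multiple of the basis vector of `SA_{c,d}` of the same weight; in particular `a - c ∈ (1/2)ℤ`.

If `a - c ∈ ℤ` the isomorphism preserves the letters `x`, `y`, and comparing `G_0 x_1 = G_1 x_0`
with `L_1 x_0` gives `b = d`. If `a - c ∈ ℤ + 1/2` it exchanges them; the relations for `G_i x_j`
and `G_{-1} y_0` force `b + d = 3/2` and `(d - 1/2)(d - 1) = 0`, and since the scalars on the images
of the `y`'s cannot vanish, `a ∉ ℤ` when `d = 1/2` and `a ∉ ℤ + 1/2` when `d = 1`.

Conversely, `x j ↦ x' (j + k)`, `y j ↦ y' (j + k)` is an isomorphism in case (i), and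
`x j ↦ y' (j + k)`, `y j ↦ (a + 1/2 + j) x' (j + k + 1)` is an isomorphism
`SA_{a,1/2} ≅ SA_{c,1}` in case (iii), whose inverse covers case (ii).
-/

noncomputable section

open Submodule

/-- The underlying data of a `ℤ/2`-graded complex vector space equipped with
operators `L m` (`m ∈ ℤ`) and `G k` (`k ∈ ℤ`, where `G k` represents the
operator `G_{k+1/2}` indexed by the half-integer `k + 1/2`). -/
structure PreNSMod where
  carrier : Type
  [acg : AddCommGroup carrier]
  [mod : Module ℂ carrier]
  even : Submodule ℂ carrier
  odd : Submodule ℂ carrier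
  compl : IsCompl even odd
  L : ℤ → carrier →ₗ[ℂ] carrier
  G : ℤ → carrier →ₗ[ℂ] carrier

attribute [instance] PreNSMod.acg PreNSMod.mod

/-- A Neveu–Schwarz module of central charge `c`. -/
structure NSMod (c : ℂ) extends PreNSMod where
  mapsL_even : ∀ (m : ℤ), ∀ v ∈ even, L m v ∈ even
  mapsL_odd : ∀ (m : ℤ), ∀ v ∈ odd, L m v ∈ odd
  mapsG_even : ∀ (k : ℤ), ∀ v ∈ even, G k v ∈ odd
  mapsG_odd : ∀ (k : ℤ), ∀ v ∈ odd, G k v ∈ even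
  rel_LL : ∀ (m n : ℤ) (v : carrier),
    L m (L n v) - L n (L m v)
      = ((n : ℂ) - (m : ℂ)) • L (m + n) v
        + (if m + n = 0 then (((m : ℂ) ^ 3 - (m : ℂ)) / 12) * c else 0) • v
  rel_LG : ∀ (m k : ℤ) (v : carrier),
    L m (G k v) - G k (L m v) = (((k : ℂ) + 1 / 2) - (m : ℂ) / 2) • G (m + k) v
  rel_GG : ∀ (k l : ℤ) (v : carrier),
    G k (G l v) + G l (G k v)
      = (2 : ℂ) • L (k + l + 1) v
        - (if k + l + 1 = 0 then (1 / 3) * (((k : ℂ) + 1 / 2) ^ 2 - 1 / 4) * c else 0) • v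

/-- A submodule (invariant subspace) of a Neveu–Schwarz module. -/
def NSMod.IsSubmodule {c : ℂ} (S : NSMod c) (W : Submodule ℂ S.carrier) : Prop :=
  (∀ (m : ℤ), ∀ v ∈ W, S.L m v ∈ W) ∧ (∀ (k : ℤ), ∀ v ∈ W, S.G k v ∈ W)

/-- Simplicity (irreducibility) of a Neveu–Schwarz module. -/
def NSMod.IsSimple {c : ℂ} (S : NSMod c) : Prop :=
  (∃ v : S.carrier, v ≠ 0) ∧
    ∀ W : Submodule ℂ S.carrier, S.IsSubmodule W → W = ⊥ ∨ W = ⊤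

/-- `W` is a nonzero submodule which is simple as a module (it has no invariant
subspaces other than `⊥` and itself). -/
def NSMod.IsSimpleSubmodule {c : ℂ} (S : NSMod c) (W : Submodule ℂ S.carrier) : Prop :=
  S.IsSubmodule W ∧ W ≠ ⊥ ∧
    ∀ W' : Submodule ℂ S.carrier, S.IsSubmodule W' → W' ≤ W → W' = ⊥ ∨ W' = W

/-- A homomorphism of Neveu–Schwarz modules: a linear map commuting with all
the operators `L m` and `G k`. -/
structure NSHom {c c' : ℂ} (S : NSMod c) (T : NSMod c') where
  toFun : S.carrier →ₗ[ℂ] T.carrier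
  commL : ∀ (m : ℤ) (v : S.carrier), toFun (S.L m v) = T.L m (toFun v)
  commG : ∀ (k : ℤ) (v : S.carrier), toFun (S.G k v) = T.G k (toFun v)

/-- Two Neveu–Schwarz modules are isomorphic if there is a bijective
homomorphism between them. -/
def NSIso {c c' : ℂ} (S : NSMod c) (T : NSMod c') : Prop :=
  ∃ f : NSHom S T, Function.Bijective f.toFun

/-- A realization of the intermediate series module `SA_{a,b}` inside a
Neveu–Schwarz module `S` of central charge `0`: a basis `x j` (`j ∈ ℤ`, even)
and `y j` (`j ∈ ℤ`, representing `y_{j+1/2}`, odd) on which the operators act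
by the defining formulas of `SA_{a,b}`. -/
structure SAFamily (a b : ℂ) (S : NSMod 0) where
  x : ℤ → S.carrier
  y : ℤ → S.carrier
  x_even : ∀ j : ℤ, x j ∈ S.even
  y_odd : ∀ j : ℤ, y j ∈ S.odd
  indep : LinearIndependent ℂ (Sum.elim x y)
  spans : Submodule.span ℂ (Set.range x ∪ Set.range y) = ⊤
  act_Lx : ∀ i j : ℤ, S.L i (x j) = (a + (j : ℂ) + (i : ℂ) * b) • x (i + j)
  act_Ly : ∀ i j : ℤ,
    S.L i (y j) = (a + 1 / 2 + (j : ℂ) + (i : ℂ) * (b - 1 / 2)) • y (i + j)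
  act_Gx : ∀ i j : ℤ, S.G i (x j) = y (i + j)
  act_Gy : ∀ i j : ℤ,
    S.G i (y j) = (a + 1 / 2 + (j : ℂ) + (2 * (i : ℂ) + 1) * (b - 1 / 2)) • x (i + j + 1)

/-- A realization of the intermediate series module `SA'_{a,b}` (for
`0 ≤ Re a < 1`, `b ≠ 1`) inside a Neveu–Schwarz module `S` of central
charge `0`.  For `(a,b) ≠ (1/2,1/2)` this is `SA_{a,b}` itself; for
`(a,b) = (1/2,1/2)` it is the quotient `SA_{1/2,1/2}/ℂ·y_{-1/2}`, in which
the image of `y_{-1/2}` (here `y (-1)`) is zero and the remaining vectors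
form a basis.  The action formulas hold verbatim in both cases. -/
structure SA'Family (a b : ℂ) (S : NSMod 0) where
  x : ℤ → S.carrier
  y : ℤ → S.carrier
  x_even : ∀ j : ℤ, x j ∈ S.even
  y_odd : ∀ j : ℤ, y j ∈ S.odd
  spans : Submodule.span ℂ (Set.range x ∪ Set.range y) = ⊤
  indep_special : a = 1 / 2 ∧ b = 1 / 2 →
    y (-1) = 0 ∧
      LinearIndependent ℂ (Sum.elim x (fun j : {j : ℤ // j ≠ -1} => y j.1))
  indep_generic : ¬(a = 1 / 2 ∧ b = 1 / 2) → LinearIndependent ℂ (Sum.elim x y)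
  act_Lx : ∀ i j : ℤ, S.L i (x j) = (a + (j : ℂ) + (i : ℂ) * b) • x (i + j)
  act_Ly : ∀ i j : ℤ,
    S.L i (y j) = (a + 1 / 2 + (j : ℂ) + (i : ℂ) * (b - 1 / 2)) • y (i + j)
  act_Gx : ∀ i j : ℤ, S.G i (x j) = y (i + j)
  act_Gy : ∀ i j : ℤ,
    S.G i (y j) = (a + 1 / 2 + (j : ℂ) + (2 * (i : ℂ) + 1) * (b - 1 / 2)) • x (i + j + 1)

/-- `u` is a highest weight vector of weight `(c,h)` generating the
Neveu–Schwarz module `S` (of central charge `c`). -/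
structure IsHW {c : ℂ} (h : ℂ) (S : NSMod c) (u : S.carrier) : Prop where
  ne_zero : u ≠ 0
  mem_even : u ∈ S.even
  hw0 : S.L 0 u = h • u
  hwL : ∀ n : ℤ, 1 ≤ n → S.L n u = 0
  hwG : ∀ k : ℤ, 0 ≤ k → S.G k u = 0
  gen : ∀ W : Submodule ℂ S.carrier, S.IsSubmodule W → u ∈ W → W = ⊤

/-- A realization of the tensor product Neveu–Schwarz module `V ⊗ S` (with
`V` of central charge `c` and `S` of central charge `0`) as a Neveu–Schwarz
module `T` of central charge `c`, via the bilinear map `t`. -/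
structure TensorWitness {c : ℂ} (V : NSMod c) (S : NSMod 0) (T : NSMod c) where
  t : V.carrier →ₗ[ℂ] S.carrier →ₗ[ℂ] T.carrier
  isTensor : IsTensorProduct t
  grade_ee : ∀ v ∈ V.even, ∀ w ∈ S.even, t v w ∈ T.even
  grade_oo : ∀ v ∈ V.odd, ∀ w ∈ S.odd, t v w ∈ T.even
  grade_eo : ∀ v ∈ V.even, ∀ w ∈ S.odd, t v w ∈ T.odd
  grade_oe : ∀ v ∈ V.odd, ∀ w ∈ S.even, t v w ∈ T.odd
  actL : ∀ (m : ℤ) (v : V.carrier) (w : S.carrier),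
    T.L m (t v w) = t (V.L m v) w + t v (S.L m w)
  actG_even : ∀ (k : ℤ), ∀ v ∈ V.even, ∀ w : S.carrier,
    T.G k (t v w) = t (V.G k v) w + t v (S.G k w)
  actG_odd : ∀ (k : ℤ), ∀ v ∈ V.odd, ∀ w : S.carrier,
    T.G k (t v w) = t (V.G k v) w - t v (S.G k w)

/-- The PBW monomial `L_{-n₁} ⋯ L_{-n_p} G_{-r₁} ⋯ G_{-r_q} u`, where the
second list records each half-integer `r = k - 1/2` by the integer `k`
(so that `G_{-r}` is the operator `G (-k)`). -/
def vermaMonomial {c : ℂ} (M : NSMod c) (u : M.carrier) (p : List ℤ × List ℤ) :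
    M.carrier :=
  (p.1.map fun n => M.L (-n)).foldr (fun f v => f v)
    ((p.2.map fun k => M.G (-k)).foldr (fun f v => f v) u)

/-- The index set for the PBW basis of a Verma module: weakly decreasing lists
of positive integers `n₁ ≥ ⋯ ≥ n_p ≥ 1`, together with strictly decreasing
lists of positive half-integers `r₁ > ⋯ > r_q > 0` (with `r = k - 1/2`
recorded by the integer `k ≥ 1`). -/
def VermaIndex : Type :=
  {p : List ℤ × List ℤ //
    p.1.Chain' (· ≥ ·) ∧ (∀ n ∈ p.1, 1 ≤ n) ∧
      p.2.Chain' (· > ·) ∧ (∀ k ∈ p.2, 1 ≤ k)}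

/-- `M` is the Verma module of highest weight `(c,h)` with highest weight
vector `u`: the PBW monomials in the negative-mode operators applied to `u`
form a basis of `M`. -/
def IsVerma {c : ℂ} (h : ℂ) (M : NSMod c) (u : M.carrier) : Prop :=
  IsHW h M u ∧
    LinearIndependent ℂ (fun p : VermaIndex => vermaMonomial M u p.1) ∧
    Submodule.span ℂ (Set.range fun p : VermaIndex => vermaMonomial M u p.1) = ⊤

/-- The grading assumption on a highest weight module `V` of highest weight
`(c,h)`: `V = ⨁_{n ∈ ℕ} V_{h-n/2}` where `D n = V_{h-n/2}` is the
`L₀`-eigenspace with eigenvalue `h - n/2`, contained in the even part for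
`n` even and the odd part for `n` odd, and `u ∈ D 0`. -/
structure GradedHW {c : ℂ} (h : ℂ) (V : NSMod c) (u : V.carrier)
    (D : ℕ → Submodule ℂ V.carrier) : Prop where
  hw : IsHW h V u
  u_mem : u ∈ D 0
  internal : DirectSum.IsInternal D
  eig : ∀ (n : ℕ), ∀ v ∈ D n, V.L 0 v = (h - (n : ℂ) / 2) • v
  even_part : ∀ n : ℕ, Even n → D n ≤ V.even
  odd_part : ∀ n : ℕ, Odd n → D n ≤ V.odd

/-- A realization of the shifted module `V ⊗ ℂ[t^{±1/2}]` on the graded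
vector space `Sh`.  Here `ι p v` represents `v ⊗ t^{p/2}` (half-integers
`s ∈ (1/2)ℤ` are recorded by integers `p` with `s = p/2`), and `D n` is the
weight space `V_{h - n/2}` (so `d = -n/2`).  The case distinction
`s + d ∈ ℤ` versus `s + d ∈ ℤ + 1/2` becomes `2 ∣ (p - n)` versus its
negation. -/
structure ShiftedWitness (a b : ℂ) {c : ℂ} (V : NSMod c)
    (D : ℕ → Submodule ℂ V.carrier) (Sh : PreNSMod) where
  ι : ℤ → V.carrier →ₗ[ℂ] Sh.carrier
  directSum : Function.Bijective
    (Finsupp.lsum ℂ ι : (ℤ →₀ V.carrier) →ₗ[ℂ] Sh.carrier)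
  grade_even : ∀ p : ℤ, (2 : ℤ) ∣ p → ∀ v : V.carrier, ι p v ∈ Sh.even
  grade_odd : ∀ p : ℤ, ¬(2 : ℤ) ∣ p → ∀ v : V.carrier, ι p v ∈ Sh.odd
  actL : ∀ (k p : ℤ) (n : ℕ), ∀ v ∈ D n,
    Sh.L k (ι p v) = ι (p + 2 * k) (V.L k v)
      + (if (2 : ℤ) ∣ (p - (n : ℤ))
          then a + (p : ℂ) / 2 + (k : ℂ) * b + (n : ℂ) / 2
          else a + (p : ℂ) / 2 + (k : ℂ) * (b - 1 / 2) + (n : ℂ) / 2) •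
            ι (p + 2 * k) v
  actG : ∀ (k p : ℤ) (n : ℕ), ∀ v ∈ D n,
    Sh.G k (ι p v) = ι (p + 2 * k + 1) (V.G k v)
      + ((-1 : ℂ) ^ n *
          (if (2 : ℤ) ∣ (p - (n : ℤ)) then 1
            else a + (p : ℂ) / 2 + (2 * (k : ℂ) + 1) * (b - 1 / 2) + (n : ℂ) / 2)) •
            ι (p + 2 * k + 1) v

/-- A realization of the *reduced* shifted module: the quotient of the
shifted module `V ⊗ ℂ[t^{±1/2}]` by the copy of `V` spanned by the vectors
`v ⊗ t^{d - 1/2}` (`v ∈ V_{h+d}`) when `(a,b) = (1/2,1/2)`, and the shifted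
module itself otherwise. -/
structure RedShiftedWitness (a b : ℂ) {c : ℂ} (V : NSMod c)
    (D : ℕ → Submodule ℂ V.carrier) (R : NSMod c) where
  ι : ℤ → V.carrier →ₗ[ℂ] R.carrier
  surj : Function.Surjective
    (Finsupp.lsum ℂ ι : (ℤ →₀ V.carrier) →ₗ[ℂ] R.carrier)
  ker_special : a = 1 / 2 ∧ b = 1 / 2 →
    LinearMap.ker (Finsupp.lsum ℂ ι : (ℤ →₀ V.carrier) →ₗ[ℂ] R.carrier)
      = Submodule.span ℂ
          {w : ℤ →₀ V.carrier | ∃ n : ℕ, ∃ v ∈ D n, w = Finsupp.single (-(n : ℤ) - 1) v}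
  ker_generic : ¬(a = 1 / 2 ∧ b = 1 / 2) →
    LinearMap.ker (Finsupp.lsum ℂ ι : (ℤ →₀ V.carrier) →ₗ[ℂ] R.carrier) = ⊥
  grade_even : ∀ p : ℤ, (2 : ℤ) ∣ p → ∀ v : V.carrier, ι p v ∈ R.even
  grade_odd : ∀ p : ℤ, ¬(2 : ℤ) ∣ p → ∀ v : V.carrier, ι p v ∈ R.odd
  actL : ∀ (k p : ℤ) (n : ℕ), ∀ v ∈ D n,
    R.L k (ι p v) = ι (p + 2 * k) (V.L k v)
      + (if (2 : ℤ) ∣ (p - (n : ℤ))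
          then a + (p : ℂ) / 2 + (k : ℂ) * b + (n : ℂ) / 2
          else a + (p : ℂ) / 2 + (k : ℂ) * (b - 1 / 2) + (n : ℂ) / 2) •
            ι (p + 2 * k) v
  actG : ∀ (k p : ℤ) (n : ℕ), ∀ v ∈ D n,
    R.G k (ι p v) = ι (p + 2 * k + 1) (V.G k v)
      + ((-1 : ℂ) ^ n *
          (if (2 : ℤ) ∣ (p - (n : ℤ)) then 1
            else a + (p : ℂ) / 2 + (2 * (k : ℂ) + 1) * (b - 1 / 2) + (n : ℂ) / 2)) •
            ι (p + 2 * k + 1) v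

/-- `φ` is a shifted character at level `s = p/2` on the Verma module `M`
with grading `D` and highest weight vector `u`:  `φ u = 1` and `φ` satisfies
the defining recursions on homogeneous vectors (`w ∈ D n` means
`L₀ w = (h + d) w` with `d = -n/2` and `w` of parity `n mod 2`; the operator
`G (-j)` is `G_{-r}` with `r = j - 1/2 > 0`). -/
def IsShiftedChar (a b : ℂ) {c : ℂ} (M : NSMod c)
    (D : ℕ → Submodule ℂ M.carrier) (u : M.carrier) (p : ℤ)
    (φ : M.carrier →ₗ[ℂ] ℂ) : Prop :=
  φ u = 1 ∧
    (∀ (n : ℕ), ∀ w ∈ D n, ∀ k : ℤ, 1 ≤ k →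
      φ (M.L (-k) w)
        = (if (2 : ℤ) ∣ (p - (n : ℤ))
            then -(a + (p : ℂ) / 2 + (k : ℂ) - (k : ℂ) * b + (n : ℂ) / 2)
            else -(a + (p : ℂ) / 2 + (k : ℂ) - (k : ℂ) * (b - 1 / 2) + (n : ℂ) / 2))
          * φ w) ∧
    (∀ (n : ℕ), ∀ w ∈ D n, ∀ j : ℤ, 1 ≤ j →
      φ (M.G (-j) w)
        = (if (2 : ℤ) ∣ (p - (n : ℤ))
            then -(-1 : ℂ) ^ n *
              (a + (p : ℂ) / 2 + ((j : ℂ) - 1 / 2)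
                - 2 * ((j : ℂ) - 1 / 2) * (b - 1 / 2) + (n : ℂ) / 2)
            else -(-1 : ℂ) ^ n)
          * φ w)


open Function

theorem Module.Basis.exists_eq_smul_of_hasEigenvector {ι R M : Type*} [CommRing R]
    [NoZeroDivisors R] [AddCommGroup M] [Module R M] (B : Module.Basis ι R M)
    {T : Module.End R M} {w : ι → R} (hw : Function.Injective w) (hT : ∀ i, T (B i) = w i • B i)
    {t : R} {v : M} (hv : T.HasEigenvector t v) :
    ∃ i, w i = t ∧ ∃ r : R, r ≠ 0 ∧ v = r • B i := by
  have weight_eq : ∀ i, B.repr v i ≠ 0 → w i = t := by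
    intro i hi
    have hdiag : (B.coord i).comp T = w i • B.coord i := B.ext fun j => by
      rcases eq_or_ne j i with rfl | hji
      · simp [hT]
      · simp [hT, hji]
    have := LinearMap.congr_fun hdiag v
    simp [hv.apply_eq_smul] at this
    exact (this.resolve_right hi).symm
  obtain ⟨i, hi⟩ : ∃ i, B.repr v i ≠ 0 := by
    by_contra! h
    exact hv.2 (B.repr.injective (Finsupp.ext fun i => by simp [h i]))
  refine ⟨i, weight_eq i hi, B.repr v i, hi, ?_⟩
  have hsingle : B.repr v = Finsupp.single i (B.repr v i) := by
    ext j
    rcases eq_or_ne j i with rfl | hji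
    · simp
    · rw [Finsupp.single_eq_of_ne hji]
      by_contra hj
      exact hji (hw ((weight_eq j hj).trans (weight_eq i hi).symm))
  rw [← B.repr_symm_single, ← hsingle, LinearEquiv.symm_apply_apply]

theorem Module.Basis.exists_linearEquiv_apply_eq_smul {ι ι' R M M' : Type*} [Semiring R]
    [AddCommMonoid M] [Module R M] [AddCommMonoid M'] [Module R M'] (B : Module.Basis ι R M)
    (B' : Module.Basis ι' R M') (σ : ι ≃ ι') (u : ι → Rˣ) :
    ∃ g : M ≃ₗ[R] M', ∀ i, g (B i) = u i • B' (σ i) :=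
  ⟨B.equiv ((B'.reindex σ.symm).unitsSMul u) (Equiv.refl ι), fun i => by
    simp [Module.Basis.unitsSMul_apply]⟩

theorem NSIso.of_linearEquiv {c₁ c₂ : ℂ} {S : NSMod c₁} {T : NSMod c₂} {ι : Type*}
    (B : Module.Basis ι ℂ S.carrier) (g : S.carrier ≃ₗ[ℂ] T.carrier)
    (hL : ∀ m i, g (S.L m (B i)) = T.L m (g (B i)))
    (hG : ∀ k i, g (S.G k (B i)) = T.G k (g (B i))) : NSIso S T := by
  have comm {A : Module.End ℂ S.carrier} {A' : Module.End ℂ T.carrier}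
      (h : ∀ i, g (A (B i)) = A' (g (B i))) (v : S.carrier) : g (A v) = A' (g v) :=
    LinearMap.congr_fun (B.ext h : g.toLinearMap ∘ₗ A = A' ∘ₗ g.toLinearMap) v
  exact ⟨⟨g, fun m => comm (hL m), fun k => comm (hG k)⟩, g.bijective⟩

theorem NSIso.symm {c₁ c₂ : ℂ} {S : NSMod c₁} {T : NSMod c₂} (h : NSIso S T) : NSIso T S := by
  obtain ⟨f, hf⟩ := h
  let e := LinearEquiv.ofBijective f.toFun hf
  have he : ∀ v, f.toFun (e.symm v) = v := e.apply_symm_apply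
  refine ⟨⟨e.symm, fun m v => e.injective ?_, fun k v => e.injective ?_⟩, e.symm.bijective⟩
  · change f.toFun (e.symm _) = f.toFun (S.L m (e.symm v))
    rw [he, f.commL, he]
  · change f.toFun (e.symm _) = f.toFun (S.G k (e.symm v))
    rw [he, f.commG, he]

/-- The `L 0`-eigenvalue of `x j` (index `Sum.inl j`) or `y j` (index `Sum.inr j`) in `SA_{a,b}`. -/
def saWeight (a : ℂ) : ℤ ⊕ ℤ → ℂ :=
  Sum.elim (fun j => a + j) (fun j => a + 1 / 2 + j)

theorem saWeight_injective (a : ℂ) : Injective (saWeight a) := by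
  have cast_inj : ∀ p q : ℤ, (p : ℂ) = q → p = q := fun p q => Int.cast_injective.eq_iff.mp
  rintro (j | j) (j' | j') h <;> simp only [saWeight, Sum.elim_inl, Sum.elim_inr] at h
  · exact congrArg _ (cast_inj _ _ (by linear_combination h))
  · have := cast_inj (2 * j) (2 * j' + 1) (by push_cast; linear_combination 2 * h)
    omega
  · have := cast_inj (2 * j + 1) (2 * j') (by push_cast; linear_combination 2 * h)
    omega
  · exact congrArg _ (cast_inj _ _ (by linear_combination h))

namespace SAFamily

variable {a b c d : ℂ} {S S' : NSMod 0}

section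

variable (F : SAFamily a b S) (F' : SAFamily c d S')

def basis : Module.Basis (ℤ ⊕ ℤ) ℂ S.carrier :=
  Module.Basis.mk F.indep (by rw [Set.Sum.elim_range, F.spans])

@[simp] theorem basis_inl (j : ℤ) : F.basis (.inl j) = F.x j := by simp [basis]

@[simp] theorem basis_inr (j : ℤ) : F.basis (.inr j) = F.y j := by simp [basis]

theorem x_ne_zero (j : ℤ) : F.x j ≠ 0 := by simpa using F.basis.ne_zero (.inl j)

theorem y_ne_zero (j : ℤ) : F.y j ≠ 0 := by simpa using F.basis.ne_zero (.inr j)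

theorem L_zero_basis (e : ℤ ⊕ ℤ) : S.L 0 (F.basis e) = saWeight a e • F.basis e := by
  rcases e with j | j <;> simp [saWeight, F.act_Lx, F.act_Ly]

theorem smul_x_inj {α β : ℂ} {p q : ℤ} (h : α • F.x p = β • F.x q) (hpq : p = q) : α = β := by
  subst hpq
  exact smul_left_injective ℂ (F.x_ne_zero p) h

theorem smul_y_inj {α β : ℂ} {p q : ℤ} (h : α • F.y p = β • F.y q) (hpq : p = q) : α = β := by
  subst hpq
  exact smul_left_injective ℂ (F.y_ne_zero p) h

theorem exists_map_basis_eq_smul (f : NSHom S S') (hf : Injective f.toFun) (e : ℤ ⊕ ℤ) :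
    ∃ e', saWeight c e' = saWeight a e ∧
      ∃ r : ℂ, r ≠ 0 ∧ f.toFun (F.basis e) = r • F'.basis e' := by
  refine F'.basis.exists_eq_smul_of_hasEigenvector (saWeight_injective c) F'.L_zero_basis
    ⟨Module.End.mem_eigenspace_iff.mpr ?_, fun h => F.basis.ne_zero e (hf (by rw [h, map_zero]))⟩
  rw [← f.commL, F.L_zero_basis, map_smul]

theorem map_basis_eq_smul (f : NSHom S S') (hf : Injective f.toFun) {e e' : ℤ ⊕ ℤ}
    (he : saWeight c e' = saWeight a e) :
    ∃ r : ℂ, r ≠ 0 ∧ f.toFun (F.basis e) = r • F'.basis e' := by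
  obtain ⟨e'', he'', hr⟩ := F.exists_map_basis_eq_smul F' f hf e
  rwa [saWeight_injective c (he''.trans he.symm)] at hr

theorem eq_of_map_x_eq_smul_x (f : NSHom S S') {m : ℤ} (ham : a = c + m) {s : ℤ → ℂ}
    (hs : s 0 ≠ 0) (hx : ∀ j, f.toFun (F.x j) = s j • F'.x (m + j)) : b = d := by
  -- `y 1 = G 0 (x 1) = G 1 (x 0)`
  have hs₁ : s 1 = s 0 := by
    have h₀ := f.commG 0 (F.x 1)
    have h₁ := f.commG 1 (F.x 0)
    rw [F.act_Gx, hx, map_smul, F'.act_Gx] at h₀ h₁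
    simp only [zero_add, add_zero] at h₀ h₁
    exact F'.smul_y_inj (h₀.symm.trans h₁) (by ring)
  have h := f.commL 1 (F.x 0)
  rw [F.act_Lx, map_smul, hx, hx, map_smul, F'.act_Lx, smul_smul, smul_smul, add_zero, hs₁] at h
  have := F'.smul_x_inj h (by ring)
  push_cast at this
  have hcancel : a + b = c + m + d := mul_left_cancel₀ hs (by linear_combination this)
  linear_combination hcancel - ham

theorem cases_of_map_x_eq_smul_y (f : NSHom S S') {m : ℤ} (ham : a = c + m + 1 / 2)
    {s t : ℤ → ℂ} (hs₀ : s 0 ≠ 0) (hs₁ : s 1 ≠ 0) (ht : ∀ n, t n ≠ 0)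
    (hx : ∀ j, f.toFun (F.x j) = s j • F'.y (m + j))
    (hy : ∀ j, f.toFun (F.y j) = t j • F'.x (m + j + 1)) :
    (¬∃ k : ℤ, a = k) ∧ b = 1 ∧ d = 1 / 2 ∨ (¬∃ k : ℤ, a = k + 1 / 2) ∧ b = 1 / 2 ∧ d = 1 := by
  have hGx : ∀ i j : ℤ, t (i + j) = s j * (a + j + (2 * i + 1) * (d - 1 / 2)) := by
    intro i j
    have h := f.commG i (F.x j)
    rw [F.act_Gx, hy, hx, map_smul, F'.act_Gy, smul_smul] at h
    have := F'.smul_x_inj h (by ring)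
    push_cast at this
    linear_combination this - s j * ham
  have hGy : t 0 = s 0 * (a + 1 - b) := by
    have h := f.commG (-1) (F.y 0)
    rw [F.act_Gy, show (-1 : ℤ) + 0 + 1 = 0 by norm_num, map_smul, hx, hy, map_smul, F'.act_Gx,
      smul_smul] at h
    have := F'.smul_y_inj h (by ring)
    push_cast at this
    linear_combination -this
  have hbd : b + d = 3 / 2 := by
    have h : t 0 = s 0 * (a + (d - 1 / 2)) := by simpa using hGx 0 0
    have hcancel : a + (d - 1 / 2) = a + 1 - b := mul_left_cancel₀ hs₀ (h.symm.trans hGy)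
    linear_combination hcancel
  -- compare the two expressions for `t 0 * t 1`
  have hd : (d - 1 / 2) * (d - 1) = 0 := by
    have h₀₀ := hGx 0 0
    have h₁₀ := hGx 1 0
    have h₀₁ := hGx (-1) 1
    have h₁₁ := hGx 0 1
    norm_num at h₀₀ h₁₀ h₀₁ h₁₁
    refine (mul_eq_zero.mp ?_).resolve_left (mul_ne_zero hs₀ hs₁)
    linear_combination (1 / 4 : ℂ) * (-(s 1 * (a + 1 + (d - 1 / 2))) * h₀₀ - t 0 * h₁₁
      + t 1 * h₀₁ + s 1 * (a + 1 - (d - 1 / 2)) * h₁₀)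
  rcases mul_eq_zero.mp hd with hd | hd
  · refine .inl ⟨fun ⟨k, hk⟩ => ht 0 ?_, by linear_combination hbd - hd, by linear_combination hd⟩
    simpa [hk, sub_eq_zero.mp hd] using hGx k (-k)
  · refine .inr ⟨fun ⟨k, hk⟩ => ht (-k - 1 + 0) ?_, by linear_combination hbd - hd,
      by linear_combination hd⟩
    rw [hGx (-k - 1) 0, hk, sub_eq_zero.mp hd]
    push_cast
    ring

end

theorem cases_of_nsIso (F : SAFamily a b S) (F' : SAFamily c d S') (h : NSIso S S') :
    ((∃ k : ℤ, a - c = (k : ℂ)) ∧ b = d) ∨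
      ((¬∃ k : ℤ, a = (k : ℂ)) ∧ (∃ k : ℤ, a - c = (k : ℂ) + 1 / 2) ∧ b = 1 ∧ d = 1 / 2) ∨
      ((¬∃ k : ℤ, a = (k : ℂ) + 1 / 2) ∧ (∃ k : ℤ, a - c = (k : ℂ) + 1 / 2) ∧
        b = 1 / 2 ∧ d = 1) := by
  obtain ⟨f, hf⟩ := h
  have hmap {e e'} := F.map_basis_eq_smul F' f hf.injective (e := e) (e' := e')
  obtain ⟨e, he, -⟩ := F.exists_map_basis_eq_smul F' f hf.injective (.inl 0)
  rcases e with m | m <;> simp only [saWeight, Sum.elim_inl, Sum.elim_inr, Int.cast_zero,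
    add_zero] at he
  · choose s hs hx using fun j : ℤ => hmap (e := .inl j) (e' := .inl (m + j)) (by
      simp only [saWeight, Sum.elim_inl]; push_cast; linear_combination he)
    simp only [basis_inl] at hx
    exact .inl ⟨⟨m, by linear_combination -he⟩, F.eq_of_map_x_eq_smul_x F' f he.symm (hs 0) hx⟩
  · choose s hs hx using fun j : ℤ => hmap (e := .inl j) (e' := .inr (m + j)) (by
      simp only [saWeight, Sum.elim_inl, Sum.elim_inr]; push_cast; linear_combination he)
    choose t ht hy using fun j : ℤ => hmap (e := .inr j) (e' := .inl (m + j + 1)) (by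
      simp only [saWeight, Sum.elim_inl, Sum.elim_inr]; push_cast; linear_combination he)
    simp only [basis_inl, basis_inr] at hx hy
    have hk : a - c = m + 1 / 2 := by linear_combination -he
    rcases F.cases_of_map_x_eq_smul_y F' f (by linear_combination -he) (hs 0) (hs 1) ht hx hy
      with ⟨ha, hb, hd⟩ | ⟨ha, hb, hd⟩
    · exact .inr (.inl ⟨ha, ⟨m, hk⟩, hb, hd⟩)
    · exact .inr (.inr ⟨ha, ⟨m, hk⟩, hb, hd⟩)

theorem nsIso_of_sub_eq_int (F : SAFamily a b S) (F' : SAFamily c d S') {k : ℤ}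
    (hk : a - c = k) (hbd : b = d) : NSIso S S' := by
  subst hbd
  obtain rfl : c = a - k := by linear_combination -hk
  obtain ⟨g, hg⟩ := F.basis.exists_linearEquiv_apply_eq_smul F'.basis
    (Equiv.sumCongr (Equiv.addRight k) (Equiv.addRight k)) 1
  have hgx (j : ℤ) : g (F.x j) = F'.x (j + k) := by simpa using hg (.inl j)
  have hgy (j : ℤ) : g (F.y j) = F'.y (j + k) := by simpa using hg (.inr j)
  refine NSIso.of_linearEquiv F.basis g ?_ ?_ <;> rintro m (j | j) <;>
    simp only [basis_inl, basis_inr, F.act_Lx, F.act_Ly, F.act_Gx, F.act_Gy, F'.act_Lx,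
      F'.act_Ly, F'.act_Gx, F'.act_Gy, map_smul, hgx, hgy] <;>
    congr 1 <;> first | (push_cast; ring1) | (congr 1; ring1)

theorem nsIso_of_sub_eq_half (F : SAFamily a (1 / 2) S) (F' : SAFamily c 1 S')
    (ha : ¬∃ k : ℤ, a = k + 1 / 2) {k : ℤ} (hk : a - c = k + 1 / 2) :
    NSIso S S' := by
  obtain rfl : c = a - k - 1 / 2 := by linear_combination -hk
  have hu (j : ℤ) : a + 1 / 2 + j ≠ 0 := fun h => ha ⟨-j - 1, by push_cast; linear_combination h⟩
  obtain ⟨g, hg⟩ := F.basis.exists_linearEquiv_apply_eq_smul F'.basis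
    ((Equiv.sumComm ℤ ℤ).trans (Equiv.sumCongr (Equiv.addRight (k + 1)) (Equiv.addRight k)))
    (Sum.elim 1 fun j => Units.mk0 _ (hu j))
  have hgx (j : ℤ) : g (F.x j) = F'.y (j + k) := by simpa using hg (.inl j)
  have hgy (j : ℤ) : g (F.y j) = (a + 1 / 2 + j) • F'.x (j + (k + 1)) := by
    simpa [Units.smul_def] using hg (.inr j)
  refine NSIso.of_linearEquiv F.basis g ?_ ?_ <;> rintro m (j | j) <;>
    simp only [basis_inl, basis_inr, F.act_Lx, F.act_Ly, F.act_Gx, F.act_Gy, F'.act_Lx,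
      F'.act_Ly, F'.act_Gx, F'.act_Gy, map_smul, hgx, hgy, smul_smul] <;>
    congr 1 <;> first | (push_cast; ring1) | (congr 1; ring1)

end SAFamily

/-- Theorem 0.1(1): `SA_{a,b} ≅ SA_{c,d}` if and only if
(i) `a - c ∈ ℤ` and `b = d`; or (ii) `a ∉ ℤ`, `a - c ∈ ℤ + 1/2`, `b = 1`,
`d = 1/2`; or (iii) `a ∉ ℤ + 1/2`, `a - c ∈ ℤ + 1/2`, `b = 1/2`, `d = 1`. -/
theorem SA_iso_iff (a b c d : ℂ) (S : NSMod 0) (F : SAFamily a b S)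
    (S' : NSMod 0) (F' : SAFamily c d S') :
    NSIso S S' ↔
      ((∃ k : ℤ, a - c = (k : ℂ)) ∧ b = d) ∨
      ((¬∃ k : ℤ, a = (k : ℂ)) ∧ (∃ k : ℤ, a - c = (k : ℂ) + 1 / 2) ∧
        b = 1 ∧ d = 1 / 2) ∨
      ((¬∃ k : ℤ, a = (k : ℂ) + 1 / 2) ∧ (∃ k : ℤ, a - c = (k : ℂ) + 1 / 2) ∧
        b = 1 / 2 ∧ d = 1) := by
  refine ⟨F.cases_of_nsIso F', ?_⟩
  rintro (⟨⟨k, hk⟩, hbd⟩ | ⟨ha, ⟨k, hk⟩, rfl, rfl⟩ | ⟨ha, ⟨k, hk⟩, rfl, rfl⟩)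
  · exact F.nsIso_of_sub_eq_int F' hk hbd
  · refine (F'.nsIso_of_sub_eq_half F (fun ⟨n, hn⟩ => ha ⟨n + k + 1, ?_⟩) (k := -k - 1) ?_).symm
    · push_cast
      linear_combination hn + hk
    · push_cast
      linear_combination -hk
  · exact F.nsIso_of_sub_eq_half F' ha hk
end
end

section
/- In SA_{−1/2,1/2} the vector y_{1/2} is annihilated by all the operators L_i and G_{i+1/2} (i ∈ ℤ), so the line ℂ·y_{1/2} is a submodule. The linear map f from SA'_{0,1} (the submodule of SA_{0,1} spanned by {x_j : j ∈ ℤ, j ≠ 0} ∪ {y_{j+1/2} : j ∈ ℤ}) to the quotient module SA_{−1/2,1/2}/ℂ·y_{1/2}, determined by f(x_i) = (1/i)·[y_{i+1/2}] for 0 ≠ i ∈ ℤ and f(y_{j+1/2}) = [x_{j+1}] for j ∈ ℤ, is an isomorphism of Neveu–Schwarz modules. Consequently SA'_{0,1} ≅ SA_{−1/2,1/2}/ℂ·y_{1/2} ≅ SA_{1/2,1/2}/ℂ·y_{−1/2}. -/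
noncomputable section

open Submodule

/-- The submodule `SA'_{0,1}` of a realization of `SA_{0,1}`: the span of
`{x_j : j ≠ 0} ∪ {y_{j+1/2} : j ∈ ℤ}`. -/
def SA01primeSpan (S : NSMod 0) (F : SAFamily 0 1 S) : Submodule ℂ S.carrier :=
  Submodule.span ℂ (F.x '' {j : ℤ | j ≠ 0} ∪ Set.range F.y)

/-!
For `b = 1/2` the assignment `x_j ↦ y_{j-1/2}`, `y_{j+1/2} ↦ (a + 1/2 + j)·x_j` intertwines the
actions of `SA_{a,1/2}` and `SA_{a+1/2,1}`. For `a = -1/2` this homomorphism `ψ` kills `y_{1/2}`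
and has image exactly `SA'_{0,1}`, and the map `f` of the statement satisfies
`f ∘ ψ = (quotient map)`. So `f` restricted to `SA'_{0,1}` is the inverse of the isomorphism
`SA_{-1/2,1/2}/ℂ·y_{1/2} ≅ SA'_{0,1}` induced by `ψ`, and it intertwines the actions because
`ψ` does. The second isomorphism comes from the index shift `SA_{a,b} ≅ SA_{a+1,b}`,
which sends `y_{1/2}` to `y_{-1/2}`.
-/

section QuotientLift

variable {R M N : Type*} [Ring R] [AddCommGroup M] [Module R M] [AddCommGroup N] [Module R N]
  {W : Submodule R M} {ψ : M →ₗ[R] N} {f : N →ₗ[R] M ⧸ W}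

theorem LinearMap.injOn_range_of_comp_eq_mkQ (hf : f ∘ₗ ψ = W.mkQ) (hW : W ≤ LinearMap.ker ψ) :
    Set.InjOn f (LinearMap.range ψ) := by
  rintro _ ⟨v, rfl⟩ _ ⟨w, rfl⟩ h
  have hvw : v - w ∈ W := by
    rw [← Submodule.Quotient.eq, ← W.mkQ_apply, ← W.mkQ_apply, ← hf]
    exact h
  rw [← sub_eq_zero, ← map_sub]
  exact hW hvw

theorem LinearMap.exists_mem_range_apply_eq_of_comp_eq_mkQ (hf : f ∘ₗ ψ = W.mkQ) (q : M ⧸ W) :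
    ∃ v ∈ LinearMap.range ψ, f v = q := by
  obtain ⟨w, rfl⟩ := W.mkQ_surjective q
  exact ⟨ψ w, LinearMap.mem_range_self ψ w, by rw [← hf]; rfl⟩

theorem LinearMap.apply_eq_mapQ_of_comp_eq_mkQ (hf : f ∘ₗ ψ = W.mkQ) {A : M →ₗ[R] M}
    {B : N →ₗ[R] N} (hA : W ≤ W.comap A) (hAB : ψ ∘ₗ A = B ∘ₗ ψ) {v : N}
    (hv : v ∈ LinearMap.range ψ) : f (B v) = W.mapQ W A hA (f v) := by
  obtain ⟨w, rfl⟩ := hv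
  calc f (B (ψ w)) = (f ∘ₗ ψ) (A w) := by rw [← LinearMap.comp_apply B, ← hAB]; rfl
    _ = W.mapQ W A hA ((f ∘ₗ ψ) w) := by rw [hf]; rfl

theorem Submodule.Quotient.equiv_mapQ {W' : Submodule R N} (e : M ≃ₗ[R] N)
    (he : W.map (e : M →ₗ[R] N) = W') {A : M →ₗ[R] M} {B : N →ₗ[R] N} (hA : W ≤ W.comap A)
    (hB : W' ≤ W'.comap B) (hAB : (e : M →ₗ[R] N) ∘ₗ A = B ∘ₗ e) (q : M ⧸ W) :
    equiv W W' e he (W.mapQ W A hA q) = W'.mapQ W' B hB (equiv W W' e he q) := by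
  induction q using Submodule.Quotient.induction_on with
  | H v => exact congrArg (Submodule.Quotient.mk (p := W')) (LinearMap.congr_fun hAB v)

end QuotientLift

theorem NSMod.isSubmodule_span_singleton {c : ℂ} (S : NSMod c) {v : S.carrier}
    (hL : ∀ m, S.L m v = 0) (hG : ∀ k, S.G k v = 0) : S.IsSubmodule (span ℂ {v}) := by
  constructor <;>
  · intro i w hw
    obtain ⟨t, rfl⟩ := mem_span_singleton.1 hw
    simp [hL, hG]

namespace SAFamily

variable {a b : ℂ} {S : NSMod 0}

def toBasis (F : SAFamily a b S) : Module.Basis (ℤ ⊕ ℤ) ℂ S.carrier :=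
  Module.Basis.mk F.indep (by rw [Set.Sum.elim_range, F.spans])

@[simp] theorem toBasis_inl (F : SAFamily a b S) (j : ℤ) : F.toBasis (Sum.inl j) = F.x j := by
  simp [toBasis]

@[simp] theorem toBasis_inr (F : SAFamily a b S) (j : ℤ) : F.toBasis (Sum.inr j) = F.y j := by
  simp [toBasis]

theorem linearMap_ext {M : Type*} [AddCommGroup M] [Module ℂ M] (F : SAFamily a b S)
    {φ φ' : S.carrier →ₗ[ℂ] M} (hx : ∀ j, φ (F.x j) = φ' (F.x j))
    (hy : ∀ j, φ (F.y j) = φ' (F.y j)) : φ = φ' :=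
  F.toBasis.ext (by rintro (j | j) <;> simp [hx, hy])

def lift {M : Type*} [AddCommGroup M] [Module ℂ M] (F : SAFamily a b S) (fx fy : ℤ → M) :
    S.carrier →ₗ[ℂ] M :=
  F.toBasis.constr ℂ (Sum.elim fx fy)

@[simp] theorem lift_x {M : Type*} [AddCommGroup M] [Module ℂ M] (F : SAFamily a b S)
    (fx fy : ℤ → M) (j : ℤ) : F.lift fx fy (F.x j) = fx j := by
  simpa [lift] using F.toBasis.constr_basis ℂ (Sum.elim fx fy) (Sum.inl j)

@[simp] theorem lift_y {M : Type*} [AddCommGroup M] [Module ℂ M] (F : SAFamily a b S)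
    (fx fy : ℤ → M) (j : ℤ) : F.lift fx fy (F.y j) = fy j := by
  simpa [lift] using F.toBasis.constr_basis ℂ (Sum.elim fx fy) (Sum.inr j)

theorem L_y_eq_zero (F : SAFamily a (1 / 2) S) (i : ℤ) {j : ℤ} (hj : a + 1 / 2 + j = 0) :
    S.L i (F.y j) = 0 := by
  rw [F.act_Ly, sub_self, mul_zero, add_zero, hj, zero_smul]

theorem G_y_eq_zero (F : SAFamily a (1 / 2) S) (i : ℤ) {j : ℤ} (hj : a + 1 / 2 + j = 0) :
    S.G i (F.y j) = 0 := by
  rw [F.act_Gy, sub_self, mul_zero, add_zero, hj, zero_smul]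

section Shift

variable {a' : ℂ} {U : NSMod 0} (F : SAFamily a b S) (F' : SAFamily a' b U)

def shiftEquiv : S.carrier ≃ₗ[ℂ] U.carrier :=
  F.toBasis.equiv F'.toBasis (Equiv.sumCongr (Equiv.subRight 1) (Equiv.subRight 1))

@[simp] theorem shiftEquiv_x (j : ℤ) : F.shiftEquiv F' (F.x j) = F'.x (j - 1) := by
  simpa [shiftEquiv] using F.toBasis.equiv_apply (Sum.inl j) F'.toBasis
    (Equiv.sumCongr (Equiv.subRight 1) (Equiv.subRight 1))

@[simp] theorem shiftEquiv_y (j : ℤ) : F.shiftEquiv F' (F.y j) = F'.y (j - 1) := by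
  simpa [shiftEquiv] using F.toBasis.equiv_apply (Sum.inr j) F'.toBasis
    (Equiv.sumCongr (Equiv.subRight 1) (Equiv.subRight 1))

theorem shiftEquiv_comp_L (ha : a' = a + 1) (m : ℤ) :
    (F.shiftEquiv F' : S.carrier →ₗ[ℂ] U.carrier) ∘ₗ S.L m = U.L m ∘ₗ F.shiftEquiv F' := by
  refine F.linearMap_ext (fun j => ?_) (fun j => ?_) <;>
  · simp only [LinearMap.comp_apply, LinearEquiv.coe_coe, F.act_Lx, F.act_Ly, F'.act_Lx,
      F'.act_Ly, map_smul, shiftEquiv_x, shiftEquiv_y, add_sub_assoc]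
    congr 1
    push_cast
    rw [ha]
    ring

theorem shiftEquiv_comp_G (ha : a' = a + 1) (k : ℤ) :
    (F.shiftEquiv F' : S.carrier →ₗ[ℂ] U.carrier) ∘ₗ S.G k = U.G k ∘ₗ F.shiftEquiv F' := by
  refine F.linearMap_ext (fun j => ?_) (fun j => ?_)
  · simp only [LinearMap.comp_apply, LinearEquiv.coe_coe, F.act_Gx, F'.act_Gx, shiftEquiv_x,
      shiftEquiv_y, add_sub_assoc]
  · simp only [LinearMap.comp_apply, LinearEquiv.coe_coe, F.act_Gy, F'.act_Gy, map_smul,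
      shiftEquiv_x, shiftEquiv_y, add_sub_cancel_right]
    rw [show k + (j - 1) + 1 = k + j by ring]
    congr 1
    push_cast
    rw [ha]
    ring

end Shift

section ParityShift

variable {a' b' : ℂ} {T : NSMod 0}

def parityShift (F : SAFamily a b S) (F' : SAFamily a' b' T) : S.carrier →ₗ[ℂ] T.carrier :=
  F.lift (fun j => F'.y (j - 1)) (fun j => (a + 1 / 2 + j) • F'.x j)

@[simp] theorem parityShift_x (F : SAFamily a b S) (F' : SAFamily a' b' T) (j : ℤ) :
    F.parityShift F' (F.x j) = F'.y (j - 1) := by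
  simp [parityShift]

@[simp] theorem parityShift_y (F : SAFamily a b S) (F' : SAFamily a' b' T) (j : ℤ) :
    F.parityShift F' (F.y j) = (a + 1 / 2 + j) • F'.x j := by
  simp [parityShift]

theorem parityShift_comp_L (F : SAFamily a (1 / 2) S) (F' : SAFamily a' 1 T)
    (ha : a' = a + 1 / 2) (m : ℤ) : F.parityShift F' ∘ₗ S.L m = T.L m ∘ₗ F.parityShift F' := by
  subst ha
  refine F.linearMap_ext (fun j => ?_) (fun j => ?_)
  · simp only [LinearMap.comp_apply, F.act_Lx, F'.act_Ly, map_smul, parityShift_x, add_sub_assoc]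
    congr 1
    push_cast
    ring
  · simp only [LinearMap.comp_apply, F.act_Ly, F'.act_Lx, map_smul, parityShift_y, smul_smul]
    congr 1
    push_cast
    ring

theorem parityShift_comp_G (F : SAFamily a (1 / 2) S) (F' : SAFamily a' 1 T)
    (ha : a' = a + 1 / 2) (k : ℤ) : F.parityShift F' ∘ₗ S.G k = T.G k ∘ₗ F.parityShift F' := by
  subst ha
  refine F.linearMap_ext (fun j => ?_) (fun j => ?_)
  · simp only [LinearMap.comp_apply, F.act_Gx, F'.act_Gy, parityShift_x, parityShift_y]
    rw [show k + (j - 1) + 1 = k + j by ring]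
    congr 1
    push_cast
    ring
  · simp only [LinearMap.comp_apply, F.act_Gy, F'.act_Gx, map_smul, parityShift_x,
      parityShift_y, add_sub_cancel_right]
    congr 1
    ring

theorem span_y_zero_le_ker_parityShift (F : SAFamily (-(1 / 2)) b S) (F' : SAFamily a' b' T) :
    span ℂ {F.y 0} ≤ LinearMap.ker (F.parityShift F') := by
  simp [span_singleton_le_iff_mem]

theorem range_parityShift (F : SAFamily (-(1 / 2)) b S) (F' : SAFamily 0 1 T) :
    LinearMap.range (F.parityShift F') = SA01primeSpan T F' := by
  apply le_antisymm
  · rw [LinearMap.range_eq_map, ← F.spans, map_le_iff_le_comap, span_le]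
    rintro _ (⟨j, rfl⟩ | ⟨j, rfl⟩)
    · exact subset_span (Or.inr ⟨j - 1, (parityShift_x F F' j).symm⟩)
    · rw [SetLike.mem_coe, mem_comap, parityShift_y, neg_add_cancel, zero_add]
      by_cases hj : j = 0
      · simp [hj]
      · exact smul_mem _ _ (subset_span (Or.inl ⟨j, hj, rfl⟩))
  · rw [SA01primeSpan, span_le]
    rintro _ (⟨j, hj, rfl⟩ | ⟨j, rfl⟩)
    · refine ⟨(j : ℂ)⁻¹ • F.y j, ?_⟩
      rw [map_smul, parityShift_y, neg_add_cancel, zero_add, smul_smul,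
        inv_mul_cancel₀ (Int.cast_ne_zero.2 hj), one_smul]
    · exact ⟨F.x (j + 1), by simp⟩

/-- The junk value `0⁻¹ = 0` sends `x 0`, which lies outside `SA'_{0,1}`, to `0`. -/
def parityShiftInv (F : SAFamily a b S) (F' : SAFamily a' b' T) :
    S.carrier →ₗ[ℂ] T.carrier ⧸ span ℂ {F'.y 0} :=
  F.lift (fun i => (i : ℂ)⁻¹ • Submodule.Quotient.mk (F'.y i))
    (fun j => Submodule.Quotient.mk (F'.x (j + 1)))

@[simp] theorem parityShiftInv_x (F : SAFamily a b S) (F' : SAFamily a' b' T) (i : ℤ) :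
    F.parityShiftInv F' (F.x i) = (i : ℂ)⁻¹ • Submodule.Quotient.mk (F'.y i) := by
  simp [parityShiftInv]

@[simp] theorem parityShiftInv_y (F : SAFamily a b S) (F' : SAFamily a' b' T) (j : ℤ) :
    F.parityShiftInv F' (F.y j) = Submodule.Quotient.mk (F'.x (j + 1)) := by
  simp [parityShiftInv]

theorem parityShiftInv_comp_parityShift (F : SAFamily a b S) (F' : SAFamily (-(1 / 2)) b' T) :
    F.parityShiftInv F' ∘ₗ F'.parityShift F = (span ℂ {F'.y 0}).mkQ := by
  refine F'.linearMap_ext (fun j => ?_) (fun j => ?_)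
  · simp
  · rw [LinearMap.comp_apply, parityShift_y, neg_add_cancel, zero_add, map_smul,
      parityShiftInv_x, smul_smul, mkQ_apply]
    by_cases hj : j = 0
    · subst hj
      simp [(Submodule.Quotient.mk_eq_zero _).2 (mem_span_singleton_self (F'.y 0))]
    · rw [mul_inv_cancel₀ (Int.cast_ne_zero.2 hj), one_smul]

end ParityShift

end SAFamily

/-- Theorem 0.2: in `SA_{-1/2,1/2}` the vector `y_{1/2}`
(here `y 0`) is annihilated by all operators, so `ℂ·y_{1/2}` is a submodule;
the map `f` with `f(x_i) = (1/i)·[y_{i+1/2}]` (`i ≠ 0`) and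
`f(y_{j+1/2}) = [x_{j+1}]` restricts to an isomorphism of Neveu–Schwarz
modules `SA'_{0,1} ≅ SA_{-1/2,1/2}/ℂ·y_{1/2}`, and consequently
`SA'_{0,1} ≅ SA_{-1/2,1/2}/ℂ·y_{1/2} ≅ SA_{1/2,1/2}/ℂ·y_{-1/2}`. -/
theorem SA01prime_iso_quotients (S : NSMod 0) (F : SAFamily 0 1 S)
    (T : NSMod 0) (F' : SAFamily (-(1 / 2)) (1 / 2) T)
    (U : NSMod 0) (F'' : SAFamily (1 / 2) (1 / 2) U) :
    (∀ i : ℤ, T.L i (F'.y 0) = 0 ∧ T.G i (F'.y 0) = 0) ∧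
    T.IsSubmodule (Submodule.span ℂ {F'.y 0}) ∧
    (∀ hW : T.IsSubmodule (Submodule.span ℂ {F'.y 0}),
      ∃ f : S.carrier →ₗ[ℂ] T.carrier ⧸ Submodule.span ℂ {F'.y 0},
        (∀ i : ℤ, i ≠ 0 →
          f (F.x i) = ((i : ℂ))⁻¹ • Submodule.Quotient.mk (F'.y i)) ∧
        (∀ j : ℤ, f (F.y j) = Submodule.Quotient.mk (F'.x (j + 1))) ∧
        (∀ m : ℤ, ∀ v ∈ SA01primeSpan S F,
          f (S.L m v)
            = Submodule.mapQ (Submodule.span ℂ {F'.y 0})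
                (Submodule.span ℂ {F'.y 0}) (T.L m)
                (fun w hw => hW.1 m w hw) (f v)) ∧
        (∀ k : ℤ, ∀ v ∈ SA01primeSpan S F,
          f (S.G k v)
            = Submodule.mapQ (Submodule.span ℂ {F'.y 0})
                (Submodule.span ℂ {F'.y 0}) (T.G k)
                (fun w hw => hW.2 k w hw) (f v)) ∧
        Set.InjOn f ↑(SA01primeSpan S F) ∧
        (∀ q : T.carrier ⧸ Submodule.span ℂ {F'.y 0},
          ∃ v ∈ SA01primeSpan S F, f v = q)) ∧
    (∀ (hW : T.IsSubmodule (Submodule.span ℂ {F'.y 0}))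
        (hW'' : U.IsSubmodule (Submodule.span ℂ {F''.y (-1)})),
      ∃ g : (T.carrier ⧸ Submodule.span ℂ {F'.y 0}) →ₗ[ℂ]
          (U.carrier ⧸ Submodule.span ℂ {F''.y (-1)}),
        Function.Bijective g ∧
        (∀ (m : ℤ) (q : T.carrier ⧸ Submodule.span ℂ {F'.y 0}),
          g (Submodule.mapQ (Submodule.span ℂ {F'.y 0})
              (Submodule.span ℂ {F'.y 0}) (T.L m) (fun w hw => hW.1 m w hw) q)
            = Submodule.mapQ (Submodule.span ℂ {F''.y (-1)})
                (Submodule.span ℂ {F''.y (-1)}) (U.L m)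
                (fun w hw => hW''.1 m w hw) (g q)) ∧
        (∀ (k : ℤ) (q : T.carrier ⧸ Submodule.span ℂ {F'.y 0}),
          g (Submodule.mapQ (Submodule.span ℂ {F'.y 0})
              (Submodule.span ℂ {F'.y 0}) (T.G k) (fun w hw => hW.2 k w hw) q)
            = Submodule.mapQ (Submodule.span ℂ {F''.y (-1)})
                (Submodule.span ℂ {F''.y (-1)}) (U.G k)
                (fun w hw => hW''.2 k w hw) (g q))) := by
  have hL (i : ℤ) : T.L i (F'.y 0) = 0 := F'.L_y_eq_zero i (by norm_num)
  have hG (i : ℤ) : T.G i (F'.y 0) = 0 := F'.G_y_eq_zero i (by norm_num)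
  refine ⟨fun i => ⟨hL i, hG i⟩, T.isSubmodule_span_singleton hL hG, fun hW => ?_,
    fun hW hW'' => ?_⟩
  · have hf := F.parityShiftInv_comp_parityShift F'
    rw [← F'.range_parityShift F]
    exact ⟨F.parityShiftInv F', fun i _ => F.parityShiftInv_x F' i, F.parityShiftInv_y F',
      fun m _ hv => LinearMap.apply_eq_mapQ_of_comp_eq_mkQ hf _
        (F'.parityShift_comp_L F (by norm_num) m) hv,
      fun k _ hv => LinearMap.apply_eq_mapQ_of_comp_eq_mkQ hf _
        (F'.parityShift_comp_G F (by norm_num) k) hv,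
      LinearMap.injOn_range_of_comp_eq_mkQ hf (F'.span_y_zero_le_ker_parityShift F),
      LinearMap.exists_mem_range_apply_eq_of_comp_eq_mkQ hf⟩
  · have ha : (1 / 2 : ℂ) = -(1 / 2) + 1 := by norm_num
    have he : (span ℂ {F'.y 0}).map (F'.shiftEquiv F'' : T.carrier →ₗ[ℂ] U.carrier)
        = span ℂ {F''.y (-1)} := by
      simp [map_span]
    exact ⟨Submodule.Quotient.equiv _ _ (F'.shiftEquiv F'') he, LinearEquiv.bijective _,
      fun m => Submodule.Quotient.equiv_mapQ _ he _ _ (F'.shiftEquiv_comp_L F'' ha m),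
      fun k => Submodule.Quotient.equiv_mapQ _ he _ _ (F'.shiftEquiv_comp_G F'' ha k)⟩
end
end

section
/- Let a, b ∈ ℂ with 0 ≤ Re(a) < 1 and b ≠ 1, and let V be a highest weight module over the Neveu–Schwarz algebra with highest weight vector u of highest weight (c, h). Then the only submodule of the tensor product module V ⊗ SA'_{a,b} containing all the vectors u ⊗ v_m for m ∈ (1/2)ℤ is V ⊗ SA'_{a,b} itself. -/
noncomputable section

open Submodule

/-! The vectors `v ∈ V` with `v ⊗ SA' ⊆ W` are stable under every `L_m`, and `G_r v` lies among
them as soon as `v` and its parity conjugate `σ (v₀ + v₁) = v₀ - v₁` do, because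
`G_r (v ⊗ w)` differs from `G_r v ⊗ w` by `σ v ⊗ G_r w`. Hence the vectors `v` with
`v ⊗ SA' ⊆ W` and `σ v ⊗ SA' ⊆ W` form a submodule of `V`; it contains the even vector `u`,
so it is all of `V`, and then `W` contains every pure tensor. -/

namespace NSMod

variable {c : ℂ} (V : NSMod c)

def parity : V.carrier →ₗ[ℂ] V.carrier :=
  LinearMap.ofIsCompl V.compl V.even.subtype (-V.odd.subtype)

variable {V}

lemma parity_of_mem_even {v : V.carrier} (hv : v ∈ V.even) : V.parity v = v :=
  LinearMap.ofIsCompl_apply_left V.compl ⟨v, hv⟩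

lemma parity_of_mem_odd {v : V.carrier} (hv : v ∈ V.odd) : V.parity v = -v :=
  LinearMap.ofIsCompl_apply_right V.compl ⟨v, hv⟩

lemma linearMap_ext_even_odd {M : Type*} [AddCommGroup M] [Module ℂ M]
    {f g : V.carrier →ₗ[ℂ] M} (he : ∀ v ∈ V.even, f v = g v) (ho : ∀ v ∈ V.odd, f v = g v) :
    f = g :=
  LinearMap.ext_on_codisjoint V.compl.codisjoint he ho

lemma parity_parity (v : V.carrier) : V.parity (V.parity v) = v := by
  have h : V.parity ∘ₗ V.parity = LinearMap.id :=
    linearMap_ext_even_odd (fun v hv => by simp [parity_of_mem_even hv])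
      (fun v hv => by simp [parity_of_mem_odd hv])
  exact LinearMap.congr_fun h v

lemma parity_L (m : ℤ) (v : V.carrier) : V.parity (V.L m v) = V.L m (V.parity v) := by
  have h : V.parity ∘ₗ V.L m = V.L m ∘ₗ V.parity :=
    linearMap_ext_even_odd
      (fun v hv => by simp [parity_of_mem_even hv, parity_of_mem_even (V.mapsL_even m v hv)])
      (fun v hv => by simp [parity_of_mem_odd hv, parity_of_mem_odd (V.mapsL_odd m v hv)])
  exact LinearMap.congr_fun h v

lemma parity_G (k : ℤ) (v : V.carrier) : V.parity (V.G k v) = -V.G k (V.parity v) := by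
  have h : V.parity ∘ₗ V.G k = -(V.G k ∘ₗ V.parity) :=
    linearMap_ext_even_odd
      (fun v hv => by simp [parity_of_mem_even hv, parity_of_mem_odd (V.mapsG_even k v hv)])
      (fun v hv => by simp [parity_of_mem_odd hv, parity_of_mem_even (V.mapsG_odd k v hv)])
  exact LinearMap.congr_fun h v

end NSMod

namespace TensorWitness

variable {c : ℂ} {V : NSMod c} {S : NSMod 0} {T : NSMod c} (tw : TensorWitness V S T)

lemma t_L (m : ℤ) (v : V.carrier) (w : S.carrier) :
    tw.t (V.L m v) w = T.L m (tw.t v w) - tw.t v (S.L m w) := by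
  rw [tw.actL, add_sub_cancel_right]

lemma t_G (k : ℤ) (v : V.carrier) (w : S.carrier) :
    tw.t (V.G k v) w = T.G k (tw.t v w) - tw.t (V.parity v) (S.G k w) := by
  have h : tw.t.flip w ∘ₗ V.G k = T.G k ∘ₗ tw.t.flip w - tw.t.flip (S.G k w) ∘ₗ V.parity :=
    NSMod.linearMap_ext_even_odd
      (fun v hv => by simp [tw.actG_even k v hv, NSMod.parity_of_mem_even hv])
      (fun v hv => by simp [tw.actG_odd k v hv, NSMod.parity_of_mem_odd hv])
  simpa using LinearMap.congr_fun h v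

/-- The largest subspace `U ⊆ V` with `U ⊗ S ⊆ W`. -/
def maxLeftFactor (W : Submodule ℂ T.carrier) : Submodule ℂ V.carrier :=
  ⨅ w, W.comap (tw.t.flip w)

variable {tw} {W : Submodule ℂ T.carrier}

lemma mem_maxLeftFactor {v : V.carrier} : v ∈ tw.maxLeftFactor W ↔ ∀ w, tw.t v w ∈ W := by
  simp [maxLeftFactor]

lemma mem_maxLeftFactor_of_span_eq_top {s : Set S.carrier} (hs : span ℂ s = ⊤)
    {v : V.carrier} (hv : ∀ w ∈ s, tw.t v w ∈ W) : v ∈ tw.maxLeftFactor W := by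
  have h : span ℂ s ≤ W.comap (tw.t v) := span_le.2 hv
  rw [hs] at h
  exact mem_maxLeftFactor.2 fun w => h trivial

lemma L_mem_maxLeftFactor (hW : T.IsSubmodule W) (m : ℤ) {v : V.carrier}
    (hv : v ∈ tw.maxLeftFactor W) : V.L m v ∈ tw.maxLeftFactor W := by
  rw [mem_maxLeftFactor] at hv ⊢
  intro w
  rw [tw.t_L]
  exact W.sub_mem (hW.1 m _ (hv w)) (hv _)

lemma G_mem_maxLeftFactor (hW : T.IsSubmodule W) (k : ℤ) {v : V.carrier}
    (hv : v ∈ tw.maxLeftFactor W) (hσv : V.parity v ∈ tw.maxLeftFactor W) :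
    V.G k v ∈ tw.maxLeftFactor W := by
  rw [mem_maxLeftFactor] at hv hσv ⊢
  intro w
  rw [tw.t_G]
  exact W.sub_mem (hW.2 k _ (hv w)) (hσv _)

lemma isSubmodule_maxLeftFactor_inf_comap_parity (hW : T.IsSubmodule W) :
    V.IsSubmodule (tw.maxLeftFactor W ⊓ (tw.maxLeftFactor W).comap V.parity) := by
  refine ⟨fun m v hv => ?_, fun k v hv => ?_⟩ <;>
    obtain ⟨hv, hσv : V.parity v ∈ tw.maxLeftFactor W⟩ := mem_inf.1 hv <;>
    refine mem_inf.2 ⟨?_, mem_comap.2 ?_⟩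
  · exact L_mem_maxLeftFactor hW m hv
  · rw [NSMod.parity_L]
    exact L_mem_maxLeftFactor hW m hσv
  · exact G_mem_maxLeftFactor hW k hv hσv
  · rw [NSMod.parity_G]
    exact neg_mem (G_mem_maxLeftFactor hW k hσv (by rwa [NSMod.parity_parity]))

lemma eq_top_of_maxLeftFactor_eq_top (h : tw.maxLeftFactor W = ⊤) : W = ⊤ := by
  refine eq_top_iff.2 fun z _ => tw.isTensor.inductionOn z W.zero_mem ?_ fun _ _ => W.add_mem
  intro v w
  exact mem_maxLeftFactor.1 (h ▸ trivial : v ∈ tw.maxLeftFactor W) w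

end TensorWitness

theorem tensor_generated_by_top_row_general (a b c h : ℂ)
    (V : NSMod c) (u : V.carrier) (hu : IsHW h V u)
    (S : NSMod 0) (F : SA'Family a b S)
    (T : NSMod c) (tw : TensorWitness V S T)
    (W : Submodule ℂ T.carrier) (hW : T.IsSubmodule W)
    (hx : ∀ m : ℤ, tw.t u (F.x m) ∈ W)
    (hy : ∀ m : ℤ, tw.t u (F.y m) ∈ W) :
    W = ⊤ := by
  set M := tw.maxLeftFactor W
  have hu_mem : u ∈ M := by
    refine TensorWitness.mem_maxLeftFactor_of_span_eq_top F.spans ?_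
    rintro w (⟨m, rfl⟩ | ⟨m, rfl⟩)
    exacts [hx m, hy m]
  have hσu : V.parity u ∈ M := by rwa [NSMod.parity_of_mem_even hu.mem_even]
  have hM : M ⊓ M.comap V.parity = ⊤ :=
    hu.gen _ (TensorWitness.isSubmodule_maxLeftFactor_inf_comap_parity hW) ⟨hu_mem, hσu⟩
  exact TensorWitness.eq_top_of_maxLeftFactor_eq_top (eq_top_iff.2 (hM ▸ inf_le_left))

/-- Lemma 2.1: the tensor product `V ⊗ SA'_{a,b}` of a
highest weight module `V` (highest weight vector `u` of weight `(c,h)`) with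
an intermediate series module is generated by the vectors `u ⊗ v_m`
(`m ∈ (1/2)ℤ`), i.e. the only submodule containing all `u ⊗ x_m` and all
`u ⊗ y_{m+1/2}` is the whole module. -/
theorem tensor_generated_by_top_row (a b c h : ℂ)
    (ha0 : 0 ≤ a.re) (ha1 : a.re < 1) (hb : b ≠ 1)
    (V : NSMod c) (u : V.carrier) (hu : IsHW h V u)
    (S : NSMod 0) (F : SA'Family a b S)
    (T : NSMod c) (tw : TensorWitness V S T)
    (W : Submodule ℂ T.carrier) (hW : T.IsSubmodule W)
    (hx : ∀ m : ℤ, tw.t u (F.x m) ∈ W)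
    (hy : ∀ m : ℤ, tw.t u (F.y m) ∈ W) :
    W = ⊤ :=
  tensor_generated_by_top_row_general a b c h V u hu S F T tw W hW hx hy
end
end

section
/- Let a, b ∈ ℂ with 0 ≤ Re(a) < 1 and b ≠ 1, and let V be a highest weight module over the Neveu–Schwarz algebra with highest weight vector u of highest weight (c, h) such that dim V ≥ 2 (V is nontrivial). Then for every m ∈ (1/2)ℤ, the eigenspace of the operator L₀ on V ⊗ SA'_{a,b} with eigenvalue m + h + a is infinite-dimensional. -/
noncomputable section

open Submodule

/-! A highest weight module `V` with `dim V ≥ 2` has `G_k u ≠ 0` for arbitrarily negative `k`: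
if `G_k u = 0` for all `k < J`, the commutators `[L_m, G_k]` propagate this to all `k`, and
then `ℂ u` is a submodule. The vectors `G_k u ⊗ v_{p/2 - k - 1/2}` all have `L₀`-weight
`p/2 + h + a`, and they are linearly independent because in each tensor factor they are
`L₀`-eigenvectors with pairwise distinct eigenvalues. -/

lemma Module.End.linearIndependent_of_apply_eq_smul {K M ι : Type*} [Field K] [AddCommGroup M]
    [Module K M] (f : Module.End K M) {μ : ι → K} (hμ : Function.Injective μ) {v : ι → M}
    (hfv : ∀ i, f (v i) = μ i • v i) (hv : ∀ i, v i ≠ 0) : LinearIndependent K v :=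
  f.eigenvectors_linearIndependent' μ hμ v fun i =>
    Module.End.hasEigenvector_iff.mpr ⟨Module.End.mem_eigenspace_iff.mpr (hfv i), hv i⟩

namespace IsHW

variable {c h : ℂ} {V : NSMod c} {u : V.carrier}

lemma L_zero_G (hu : IsHW h V u) (k : ℤ) :
    V.L 0 (V.G k u) = (h + k + 1 / 2) • V.G k u := by
  have hrel := V.rel_LG 0 k u
  rw [hu.hw0, map_smul, zero_add, sub_eq_iff_eq_add] at hrel
  rw [hrel, ← add_smul]
  congr 1
  push_cast
  ring

/-- For `m ≥ 1` and `k < min J 0`, both terms of `[L_m, G_k] u = (k + 1/2 - m/2) G_{m+k} u`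
vanish, while the coefficient does not. -/
lemma G_eq_zero_of_forall_lt (hu : IsHW h V u) (J : ℤ) (hJ : ∀ k < J, V.G k u = 0) (l : ℤ) :
    V.G l u = 0 := by
  set k := min (min J 0) l - 1
  have hrel := V.rel_LG (l - k) k u
  rw [hJ k (by omega), hu.hwL (l - k) (by omega), map_zero, map_zero, sub_zero,
    sub_add_cancel] at hrel
  refine (smul_eq_zero.mp hrel.symm).resolve_left ?_
  have hcoef :
      (k : ℂ) + 1 / 2 - ((l - k : ℤ) : ℂ) / 2 = ((3 * k + 1 - l : ℤ) : ℂ) / 2 := by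
    push_cast
    ring
  rw [hcoef]
  exact div_ne_zero (Int.cast_ne_zero.mpr (by omega)) two_ne_zero

/-- Once every `G_k` kills `u`, the relation `{G_{m-1}, G_0} = 2 L_m - (central)` makes `ℂ u`
invariant. -/
lemma rank_le_one_of_forall_G_eq_zero (hu : IsHW h V u) (hG : ∀ k, V.G k u = 0) :
    Module.rank ℂ V.carrier ≤ 1 := by
  have hL : ∀ m, V.L m u ∈ span ℂ {u} := by
    intro m
    have hrel := V.rel_GG (m - 1) 0 u
    rw [hG, hG, map_zero, map_zero, add_zero, show m - 1 + 0 + 1 = m by ring, eq_comm,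
      sub_eq_zero] at hrel
    rw [← smul_mem_iff _ (two_ne_zero : (2 : ℂ) ≠ 0), hrel]
    exact smul_mem _ _ (mem_span_singleton_self u)
  have hinv : V.IsSubmodule (span ℂ {u}) := by
    constructor
    · intro m v hv
      obtain ⟨α, rfl⟩ := mem_span_singleton.mp hv
      rw [map_smul]
      exact smul_mem _ _ (hL m)
    · intro k v hv
      obtain ⟨α, rfl⟩ := mem_span_singleton.mp hv
      rw [map_smul, hG, smul_zero]
      exact zero_mem _
  rw [← rank_top, ← hu.gen _ hinv (mem_span_singleton_self u)]
  exact (rank_span_le _).trans (by simp)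

lemma exists_lt_G_ne_zero (hu : IsHW h V u) (hdim : 2 ≤ Module.rank ℂ V.carrier) (J : ℤ) :
    ∃ k < J, V.G k u ≠ 0 := by
  by_contra! hJ
  have h21 : (2 : Cardinal) ≤ 1 :=
    hdim.trans (hu.rank_le_one_of_forall_G_eq_zero (hu.G_eq_zero_of_forall_lt J hJ))
  norm_num at h21

end IsHW

namespace SA'Family

variable {a b : ℂ} {S : NSMod 0} (F : SA'Family a b S)

/-- The basis vector `v_{s/2}` of weight `a + s/2`; for odd `s`, `s / 2` is floor division,
so that `y (s / 2)` is `y_{s/2}`. -/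
def vec (s : ℤ) : S.carrier :=
  if Even s then F.x (s / 2) else F.y (s / 2)

lemma L_zero_vec (s : ℤ) : S.L 0 (F.vec s) = (a + s / 2) • F.vec s := by
  rcases Int.even_or_odd' s with ⟨j, rfl | rfl⟩
  · have hs : Even (2 * j) := even_two_mul j
    simp only [vec, if_pos hs, F.act_Lx, zero_add]
    congr 1
    rw [Int.mul_ediv_cancel_left _ two_ne_zero]
    push_cast
    ring
  · have hs : ¬ Even (2 * j + 1) := Int.not_even_two_mul_add_one j
    simp only [vec, if_neg hs, F.act_Ly, zero_add]
    have hj : (2 * j + 1) / 2 = j := by omega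
    rw [hj]
    congr 1
    push_cast
    ring

lemma linearIndependent_x_y :
    LinearIndependent ℂ (Sum.elim F.x (fun j : {j : ℤ // j ≠ -1} => F.y j)) := by
  by_cases hab : a = 1 / 2 ∧ b = 1 / 2
  · exact (F.indep_special hab).2
  · convert (F.indep_generic hab).comp (Sum.map id Subtype.val)
      (Sum.map_injective.mpr ⟨Function.injective_id, Subtype.val_injective⟩) using 1
    ext (j | j) <;> rfl

lemma vec_ne_zero {s : ℤ} (hs : s ≠ -1) : F.vec s ≠ 0 := by
  unfold vec
  split_ifs with he
  · exact F.linearIndependent_x_y.ne_zero (Sum.inl (s / 2))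
  · exact F.linearIndependent_x_y.ne_zero (Sum.inr ⟨s / 2, by grind⟩)

lemma linearIndependent_vec :
    LinearIndependent ℂ (fun s : {s : ℤ // s ≠ -1} => F.vec s) :=
  Module.End.linearIndependent_of_apply_eq_smul (S.L 0)
    (μ := fun s : {s : ℤ // s ≠ -1} => a + ((s : ℤ) : ℂ) / 2)
    (fun s t hst => Subtype.ext (by simpa using hst)) (fun s => F.L_zero_vec s)
    (fun s => F.vec_ne_zero s.2)

end SA'Family

namespace TensorWitness

variable {c : ℂ} {V : NSMod c} {S : NSMod 0} {T : NSMod c} (tw : TensorWitness V S T)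

lemma L_zero_t {v : V.carrier} {w : S.carrier} {μ ν : ℂ} (hv : V.L 0 v = μ • v)
    (hw : S.L 0 w = ν • w) : T.L 0 (tw.t v w) = (μ + ν) • tw.t v w := by
  rw [tw.actL, hv, hw, map_smul, LinearMap.smul_apply, map_smul, add_smul]

lemma linearIndependent_t {ι : Type*} {v : ι → V.carrier} {w : ι → S.carrier}
    (hv : LinearIndependent ℂ v) (hw : LinearIndependent ℂ w) :
    LinearIndependent ℂ (fun i => tw.t (v i) (w i)) := by
  have hvw := ((hv.tmul_of_isDomain hw).comp (fun i => (i, i))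
    (fun i j hij => congrArg Prod.fst hij)).map' tw.isTensor.equiv.toLinearMap
    tw.isTensor.equiv.ker
  have hfun : (fun i => tw.t (v i) (w i)) = tw.isTensor.equiv.toLinearMap ∘
      (fun i : ι × ι => v i.1 ⊗ₜ[ℂ] w i.2) ∘ fun i => (i, i) := by
    ext i
    simp
  rw [hfun]
  exact hvw

end TensorWitness

theorem tensor_weight_spaces_infinite_dimensional_general (a b c h : ℂ)
    (V : NSMod c) (u : V.carrier) (hu : IsHW h V u)
    (hdim : 2 ≤ Module.rank ℂ V.carrier)
    (S : NSMod 0) (F : SA'Family a b S)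
    (T : NSMod c) (tw : TensorWitness V S T) (p : ℤ) :
    ¬ Module.Finite ℂ
      ↥(LinearMap.ker (T.L 0 - ((p : ℂ) / 2 + h + a) •
          (LinearMap.id : T.carrier →ₗ[ℂ] T.carrier))) := by
  set E := LinearMap.ker (T.L 0 - ((p : ℂ) / 2 + h + a) •
    (LinearMap.id : T.carrier →ₗ[ℂ] T.carrier))
  intro hfin
  set K := {k : ℤ | 2 * k < p ∧ V.G k u ≠ 0}
  have hK : K.Infinite := Set.infinite_of_forall_exists_lt fun J => by
    obtain ⟨k, hkJ, hk⟩ := hu.exists_lt_G_ne_zero hdim (min J (p / 2))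
    exact ⟨k, ⟨by omega, hk⟩, by omega⟩
  have : Infinite K := hK.to_subtype
  have hGu : LinearIndependent ℂ (fun k : K => V.G k u) :=
    Module.End.linearIndependent_of_apply_eq_smul (V.L 0)
      (μ := fun k : K => h + ((k : ℤ) : ℂ) + 1 / 2)
      (fun k l hkl => Subtype.ext (by simpa using hkl)) (fun k => hu.L_zero_G k) (fun k => k.2.2)
  have hvec : LinearIndependent ℂ (fun k : K => F.vec (p - 2 * k - 1)) :=
    F.linearIndependent_vec.comp
      (fun k : K => ⟨p - 2 * k - 1, by have := k.2.1; omega⟩)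
      (fun k l hkl => Subtype.ext (by simp at hkl; omega))
  have hmem : ∀ k : K, tw.t (V.G k u) (F.vec (p - 2 * k - 1)) ∈ E := fun k => by
    rw [LinearMap.mem_ker, LinearMap.sub_apply, tw.L_zero_t (hu.L_zero_G k) (F.L_zero_vec _),
      LinearMap.smul_apply, LinearMap.id_apply, ← sub_smul]
    exact smul_eq_zero_of_left (by push_cast; ring) _
  have hind : LinearIndependent ℂ (fun k : K => (⟨_, hmem k⟩ : E)) :=
    LinearIndependent.of_comp E.subtype (tw.linearIndependent_t hGu hvec)
  exact Module.Finite.not_linearIndependent_of_infinite _ hind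

/-- if `V` is a nontrivial (`dim V ≥ 2`) highest weight
module with highest weight `(c,h)`, then every `L₀`-eigenspace of
`V ⊗ SA'_{a,b}` with eigenvalue `m + h + a` (`m ∈ (1/2)ℤ`, recorded as
`m = p/2`) is infinite-dimensional. -/
theorem tensor_weight_spaces_infinite_dimensional (a b c h : ℂ)
    (ha0 : 0 ≤ a.re) (ha1 : a.re < 1) (hb : b ≠ 1)
    (V : NSMod c) (u : V.carrier) (hu : IsHW h V u)
    (hdim : 2 ≤ Module.rank ℂ V.carrier)
    (S : NSMod 0) (F : SA'Family a b S)
    (T : NSMod c) (tw : TensorWitness V S T) (p : ℤ) :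
    ¬ Module.Finite ℂ
      ↥(LinearMap.ker (T.L 0 - ((p : ℂ) / 2 + h + a) •
          (LinearMap.id : T.carrier →ₗ[ℂ] T.carrier))) :=
  tensor_weight_spaces_infinite_dimensional_general a b c h V u hu hdim S F T tw p
end
end
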